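/- For n ≥ 5 and 3 ≤ i < j ≤ n−1, c(n,i,j) = 0: a member of C_n cannot end in an ascent i, j with i ≥ 3, since the subsequence n, 2, i, j would form an occurrence of 41\overline{23}. -/

import Mathlib

open List

/-- `w` is a linear permutation of `[n] = {1,…,n}` written in one-line notation. -/
def IsPermOf (n : ℕ) (w : List ℕ) : Prop :=
  w.Perm ((List.range n).map (· + 1))

/-- occurrence of the vincular pattern 1̄2̄3 : positions a, a+1, c with c > a+1
forming an increasing triple. -/
def Occ123 (w : List ℕ) : Prop :=
  ∃ a c, a + 1 < c ∧ c < w.length ∧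
    w.getD a 0 < w.getD (a + 1) 0 ∧ w.getD (a + 1) 0 < w.getD c 0

/-- occurrence of the vincular pattern 41\overline{23} : positions a < b < c (and c+1)
with w_b < w_c < w_{c+1} < w_a. -/
def Occ4123 (w : List ℕ) : Prop :=
  ∃ a b c, a < b ∧ b < c ∧ c + 1 < w.length ∧
    w.getD b 0 < w.getD c 0 ∧ w.getD c 0 < w.getD (c + 1) 0 ∧
    w.getD (c + 1) 0 < w.getD a 0

/-- occurrence of the vincular pattern 1\overline{23} : positions a < b (and b+1)
forming an increasing triple. -/
def Occ1_23 (w : List ℕ) : Prop :=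
  ∃ a b, a < b ∧ b + 1 < w.length ∧
    w.getD a 0 < w.getD b 0 ∧ w.getD b 0 < w.getD (b + 1) 0

/-- occurrence of the vincular pattern \overline{23}41 : positions a, a+1, c, d with
a+1 < c < d and w_d < w_a < w_{a+1} < w_c. -/
def Occ2341 (w : List ℕ) : Prop :=
  ∃ a c d, a + 1 < c ∧ c < d ∧ d < w.length ∧
    w.getD d 0 < w.getD a 0 ∧ w.getD a 0 < w.getD (a + 1) 0 ∧
    w.getD (a + 1) 0 < w.getD c 0

/-- a circular permutation (represented by any linear reading `w`) avoids
\overline{23}41 iff no cyclic rotation of `w` contains it. -/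
def CircAvoids2341 (w : List ℕ) : Prop := ∀ k, ¬ Occ2341 (w.rotate k)

/-- the set `L_n` of linear permutations of `[n]` avoiding both 1̄2̄3 and 41\overline{23}. -/
def Lset (n : ℕ) : Set (List ℕ) :=
  {w | IsPermOf n w ∧ ¬ Occ123 w ∧ ¬ Occ4123 w}

/-- the permutation (n−1)(n−2)⋯1 n. -/
def excludedPerm (n : ℕ) : List ℕ :=
  ((List.range (n - 1)).map (· + 1)).reverse ++ [n]

/-- `L_n^* = L_n \ {(n−1)(n−2)⋯1n}`. -/
def Lstar (n : ℕ) : Set (List ℕ) := Lset n \ {excludedPerm n}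

/-- `B_n`: members of `L_n^*` in which 1 occurs to the right of n. -/
def Bset (n : ℕ) : Set (List ℕ) :=
  {w ∈ Lstar n | w.idxOf n < w.idxOf 1}

/-- `C_n`: members of `L_n^*` in which 1 occurs to the left of n and 2 to its right. -/
def Cset (n : ℕ) : Set (List ℕ) :=
  {w ∈ Lstar n | w.idxOf 1 < w.idxOf n ∧ w.idxOf n < w.idxOf 2}

/-- members of `B_n` ending in the two letters i, j. -/
def Bnij (n i j : ℕ) : Set (List ℕ) :=
  {w ∈ Bset n | ∃ u, w = u ++ [i, j]}

/-- members of `C_n` ending in the two letters i, j. -/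
def Cnij (n i j : ℕ) : Set (List ℕ) :=
  {w ∈ Cset n | ∃ u, w = u ++ [i, j]}

noncomputable def bcount (n i j : ℕ) : ℕ := (Bnij n i j).ncard
noncomputable def ccount (n i j : ℕ) : ℕ := (Cnij n i j).ncard

/-- `b(n,j)`: the number of members of `B_n` ending in the letter j. -/
noncomputable def bLast (n j : ℕ) : ℕ := Set.ncard {w ∈ Bset n | ∃ u, w = u ++ [j]}

/-- `c(n,j)`: the number of members of `C_n` ending in the letter j. -/
noncomputable def cLast (n j : ℕ) : ℕ := Set.ncard {w ∈ Cset n | ∃ u, w = u ++ [j]}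

/-- `V_n`: linear permutations of `[n]` avoiding both 1̄2̄3 and 1\overline{23}. -/
def Vset (n : ℕ) : Set (List ℕ) :=
  {w | IsPermOf n w ∧ ¬ Occ123 w ∧ ¬ Occ1_23 w}

/-- `v(n,j)`: the number of members of `V_n` ending in the letter j. -/
noncomputable def vcount (n j : ℕ) : ℕ := Set.ncard {w ∈ Vset n | ∃ u, w = u ++ [j]}

theorem IsPermOf.mem {n : ℕ} {w : List ℕ} (hw : IsPermOf n w) {k : ℕ} (hk₁ : 1 ≤ k)
    (hkn : k ≤ n) : k ∈ w :=
  hw.mem_iff.2 (List.mem_map.2 ⟨k - 1, List.mem_range.2 (by omega), by omega⟩)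

theorem List.getD_idxOf {α : Type*} [BEq α] [LawfulBEq α] {l : List α} {a d : α}
    (h : a ∈ l) : l.getD (l.idxOf a) d = a := by
  rw [getD_eq_getElem _ _ (idxOf_lt_length_iff.2 h)]
  exact getElem_idxOf _

theorem occ4123_append_pair {u : List ℕ} {p q x y : ℕ} (hpq : u.idxOf p < u.idxOf q)
    (hq : q ∈ u) (hqx : q < x) (hxy : x < y) (hyp : y < p) : Occ4123 (u ++ [x, y]) := by
  have hp : p ∈ u := idxOf_lt_length_iff.1 (hpq.trans (idxOf_lt_length_iff.2 hq))
  have hq_lt : u.idxOf q < u.length := idxOf_lt_length_iff.2 hq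
  refine ⟨u.idxOf p, u.idxOf q, u.length, hpq, hq_lt, by simp, ?_⟩
  rw [getD_append _ _ _ _ hq_lt, getD_append _ _ _ _ (hpq.trans hq_lt),
    getD_idxOf hq, getD_idxOf hp,
    getD_append_right _ _ _ _ le_rfl, getD_append_right _ _ _ _ (Nat.le_succ _)]
  simp [hqx, hxy, hyp]

theorem stmt7_general (n i j : ℕ) (hi : 3 ≤ i) (hij : i < j) (hj : j ≤ n - 1) :
    ccount n i j = 0 := by
  suffices Cnij n i j = ∅ by simp [ccount, this]
  refine Set.eq_empty_of_forall_notMem ?_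
  rintro _ ⟨⟨⟨⟨hperm, -, havoid⟩, -⟩, -, hn2⟩, u, rfl⟩
  have mem_u : ∀ k, 1 ≤ k → k ≤ n → k ≠ i → k ≠ j → k ∈ u := fun k hk₁ hkn hki hkj => by
    simpa [hki, hkj] using hperm.mem hk₁ hkn
  have h2 : 2 ∈ u := mem_u 2 (by omega) (by omega) (by omega) (by omega)
  have hn : n ∈ u := mem_u n (by omega) le_rfl (by omega) (by omega)
  rw [idxOf_append_of_mem hn, idxOf_append_of_mem h2] at hn2
  exact havoid (occ4123_append_pair hn2 h2 (by omega) hij (by omega))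

theorem stmt7 (n i j : ℕ) (hn : 5 ≤ n) (hi : 3 ≤ i) (hij : i < j) (hj : j ≤ n - 1) :
    ccount n i j = 0 :=
  stmt7_general n i j hi hij hj
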